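/- arXiv:2605.26614 — 2 statements merged into one kernel-verified Lean document; each statement's English description precedes it below -/
import Mathlib

section
/- Let H be a bipartite graph with v vertices and e edges, v ≤ e, and set s = 2e/v and s' = 2e/(2e-v). Suppose that for every graph G with adjacency matrix A one has hom(H, G) ≥ ‖A‖_{s'→s}^e. Then for every graph G with M(G) = 2e(G) > 0, hom(H, G) ≥ λ(G)^{2e-v} · M(G)^{v-e}. -/
open scoped Classical BigOperators

/-- Adjacency matrix of a simple graph on `Fin n`, with real entries. -/
noncomputable def adjMat {n : ℕ} (G : SimpleGraph (Fin n)) : Matrix (Fin n) (Fin n) ℝ :=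
  fun i j => if G.Adj i j then 1 else 0

/-- Spectral radius (largest real eigenvalue) of a real matrix. -/
noncomputable def specRad {α : Type*} [Fintype α] (A : Matrix α α ℝ) : ℝ :=
  sSup {μ : ℝ | ∃ x : α → ℝ, x ≠ 0 ∧ A.mulVec x = μ • x}

/-- The ℓ^p norm of a finitely supported real vector, for a real exponent `p`. -/
noncomputable def pNorm {α : Type*} [Fintype α] (p : ℝ) (x : α → ℝ) : ℝ :=
  (∑ i, |x i| ^ p) ^ (1 / p)

/-- The ℓ^p → ℓ^r operator norm of a real matrix. -/
noncomputable def opNorm {α β : Type*} [Fintype α] [Fintype β] (p r : ℝ)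
    (A : Matrix β α ℝ) : ℝ :=
  sSup {c : ℝ | ∃ x : α → ℝ, x ≠ 0 ∧ c = pNorm r (A.mulVec x) / pNorm p x}

/-!
The spectral radius is controlled by interpolating between `‖A‖_{s'→s}` and `‖A‖_{∞→1} ≤ M`,
done by hand for nonnegative `A`. Write `p = s' ∈ (1, 2]` and `x = u ^ (p/2)` for `x ≥ 0`.
Hölder along row `i` (weights `A i j`) gives `(A x)_i ≤ (A u)_i ^ (p/2) d_i ^ (1 - p/2)`, with
`d_i` the row sum; squaring and applying Hölder over the rows with exponents `p/q` and `2 - p`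
yields `‖A x‖₂² ≤ ‖A u‖_q ^ p M ^ (2 - p) ≤ ‖A‖_{p→q} ^ p M ^ (2 - p) ‖x‖₂²`, since
`‖u‖_p ^ p = ‖x‖₂²`. An eigenvector `y` satisfies `|μ| |y| ≤ A |y|` entrywise, so
`|λ| ≤ ‖A‖_{s'→s} ^ (s'/2) M ^ (1 - s'/2)`; raised to the power `2e - v` this is
`‖A‖_{s'→s} ^ e M ^ (e - v) ≤ hom(H, G) M ^ (e - v)`.
-/

open Finset Matrix Real

section Norms

variable {α β : Type*} [Fintype α] [Fintype β]

lemma pNorm_nonneg (p : ℝ) (x : α → ℝ) : 0 ≤ pNorm p x :=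
  rpow_nonneg (sum_nonneg fun _ _ => rpow_nonneg (abs_nonneg _) _) _

lemma pNorm_pos {p : ℝ} {x : α → ℝ} (hx : x ≠ 0) : 0 < pNorm p x := by
  obtain ⟨j, hj⟩ := Function.ne_iff.mp hx
  exact rpow_pos_of_pos (sum_pos' (fun _ _ => rpow_nonneg (abs_nonneg _) _)
    ⟨j, mem_univ j, rpow_pos_of_pos (abs_pos.2 hj) _⟩) _

lemma pNorm_zero {p : ℝ} (hp : p ≠ 0) : pNorm p (0 : α → ℝ) = 0 := by
  simp [pNorm, zero_rpow hp, zero_rpow (inv_ne_zero hp)]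

lemma pNorm_rpow_self {p : ℝ} (hp : p ≠ 0) (x : α → ℝ) : pNorm p x ^ p = ∑ i, |x i| ^ p := by
  rw [pNorm, ← rpow_mul (sum_nonneg fun _ _ => rpow_nonneg (abs_nonneg _) _),
    one_div_mul_cancel hp, rpow_one]

lemma abs_le_pNorm {p : ℝ} (hp : 0 < p) (x : α → ℝ) (j : α) : |x j| ≤ pNorm p x :=
  calc |x j| = (|x j| ^ p) ^ (1 / p) := by
        rw [← rpow_mul (abs_nonneg _), mul_one_div_cancel hp.ne', rpow_one]
    _ ≤ pNorm p x := rpow_le_rpow (rpow_nonneg (abs_nonneg _) _)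
        (single_le_sum (fun i _ => rpow_nonneg (abs_nonneg (x i)) p) (mem_univ j))
        (by positivity)

lemma pNorm_le_of_abs_le {r c : ℝ} (hr : 0 < r) (hc : 0 ≤ c) {y : β → ℝ}
    (h : ∀ i, |y i| ≤ c) : pNorm r y ≤ (Fintype.card β : ℝ) ^ (1 / r) * c :=
  calc pNorm r y ≤ (∑ _i : β, c ^ r) ^ (1 / r) :=
        rpow_le_rpow (sum_nonneg fun _ _ => rpow_nonneg (abs_nonneg _) _)
          (sum_le_sum fun i _ => rpow_le_rpow (abs_nonneg _) (h i) hr.le) (by positivity)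
    _ = (Fintype.card β : ℝ) ^ (1 / r) * c := by
        rw [sum_const, card_univ, nsmul_eq_mul, mul_rpow (Nat.cast_nonneg _) (by positivity),
          ← rpow_mul hc, mul_one_div_cancel hr.ne', rpow_one]

lemma bddAbove_pNorm_mulVec_div {p r : ℝ} (hp : 0 < p) (hr : 0 < r) (A : Matrix β α ℝ) :
    BddAbove {c : ℝ | ∃ x : α → ℝ, x ≠ 0 ∧ c = pNorm r (A *ᵥ x) / pNorm p x} := by
  refine ⟨(Fintype.card β : ℝ) ^ (1 / r) * ∑ i, ∑ j, |A i j|, ?_⟩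
  rintro c ⟨x, hx, rfl⟩
  rw [div_le_iff₀ (pNorm_pos hx), mul_assoc]
  refine pNorm_le_of_abs_le hr
    (mul_nonneg (sum_nonneg fun i _ => sum_nonneg fun j _ => abs_nonneg _) (pNorm_nonneg _ _))
    fun i => ?_
  calc |(A *ᵥ x) i| ≤ ∑ j, |A i j| * |x j| := by
        simpa only [mulVec, dotProduct, abs_mul] using
          abs_sum_le_sum_abs (fun j => A i j * x j) univ
    _ ≤ ∑ j, |A i j| * pNorm p x := by gcongr with j; exact abs_le_pNorm hp x j
    _ ≤ (∑ i, ∑ j, |A i j|) * pNorm p x := by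
        rw [← sum_mul]
        exact mul_le_mul_of_nonneg_right
          (single_le_sum (f := fun i => ∑ j, |A i j|)
            (fun i _ => sum_nonneg fun j _ => abs_nonneg (A i j)) (mem_univ i))
          (pNorm_nonneg _ _)

lemma opNorm_nonneg (p r : ℝ) (A : Matrix β α ℝ) : 0 ≤ opNorm p r A :=
  Real.sSup_nonneg fun _ ⟨_, _, hc⟩ => hc ▸ div_nonneg (pNorm_nonneg _ _) (pNorm_nonneg _ _)

lemma pNorm_mulVec_le {p r : ℝ} (hp : 0 < p) (hr : 0 < r) (A : Matrix β α ℝ) (x : α → ℝ) :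
    pNorm r (A *ᵥ x) ≤ opNorm p r A * pNorm p x := by
  rcases eq_or_ne x 0 with rfl | hx
  · simp [pNorm_zero hr.ne', pNorm_zero hp.ne']
  rw [← div_le_iff₀ (pNorm_pos hx)]
  exact le_csSup (bddAbove_pNorm_mulVec_div hp hr A) ⟨x, hx, rfl⟩

end Norms

lemma sum_rpow_mul_rpow_le {ι : Type*} (s : Finset ι) {F D : ι → ℝ} (hF : ∀ i ∈ s, 0 ≤ F i)
    (hD : ∀ i ∈ s, 0 ≤ D i) {a b : ℝ} (ha : 0 ≤ a) (hb : 0 ≤ b) (hab : a + b = 1) :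
    ∑ i ∈ s, F i ^ a * D i ^ b ≤ (∑ i ∈ s, F i) ^ a * (∑ i ∈ s, D i) ^ b := by
  rcases ha.eq_or_lt with rfl | ha
  · obtain rfl : b = 1 := by linarith
    simp
  rcases hb.eq_or_lt with rfl | hb
  · obtain rfl : a = 1 := by linarith
    simp
  have hpq : (1 / a).HolderConjugate (1 / b) := by
    simpa only [one_div] using HolderConjugate.inv_inv ha hb hab
  have h := inner_le_Lp_mul_Lq_of_nonneg s hpq (f := fun i => F i ^ a) (g := fun i => D i ^ b)
    (fun i hi => rpow_nonneg (hF i hi) a) (fun i hi => rpow_nonneg (hD i hi) b)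
  have hF' : ∀ i ∈ s, (F i ^ a) ^ (1 / a) = F i := fun i hi => by
    rw [← rpow_mul (hF i hi), mul_one_div_cancel ha.ne', rpow_one]
  have hD' : ∀ i ∈ s, (D i ^ b) ^ (1 / b) = D i := fun i hi => by
    rw [← rpow_mul (hD i hi), mul_one_div_cancel hb.ne', rpow_one]
  rwa [sum_congr rfl hF', sum_congr rfl hD', one_div_one_div, one_div_one_div] at h

section Interpolation

variable {α β : Type*} [Fintype α] {A : Matrix β α ℝ}

lemma mulVec_rpow_le (hA : ∀ i j, 0 ≤ A i j) {θ : ℝ} (hθ0 : 0 < θ) (hθ1 : θ ≤ 1)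
    {u : α → ℝ} (hu : ∀ j, 0 ≤ u j) (i : β) :
    (A *ᵥ fun j => u j ^ θ) i ≤ (A *ᵥ u) i ^ θ * (∑ j, A i j) ^ (1 - θ) := by
  have h := inner_le_weight_mul_Lp_of_nonneg univ (one_le_one_div hθ0 hθ1) (A i)
    (fun j => u j ^ θ) (hA i) fun j => rpow_nonneg (hu j) θ
  have hu' : ∀ j, (u j ^ θ) ^ θ⁻¹ = u j := fun j => by
    rw [← rpow_mul (hu j), mul_inv_cancel₀ hθ0.ne', rpow_one]
  simp only [one_div, inv_inv, hu'] at h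
  rw [mul_comm]
  exact h

lemma sq_mulVec_rpow_le (hA : ∀ i j, 0 ≤ A i j) {p : ℝ} (hp : 0 < p) (hp2 : p ≤ 2)
    {u : α → ℝ} (hu : ∀ j, 0 ≤ u j) (i : β) :
    (A *ᵥ fun j => u j ^ (p / 2)) i ^ 2 ≤ (A *ᵥ u) i ^ p * (∑ j, A i j) ^ (2 - p) := by
  have hAu : 0 ≤ (A *ᵥ u) i := sum_nonneg fun j _ => mul_nonneg (hA i j) (hu j)
  have hd : 0 ≤ ∑ j, A i j := sum_nonneg fun j _ => hA i j
  calc (A *ᵥ fun j => u j ^ (p / 2)) i ^ 2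
      ≤ ((A *ᵥ u) i ^ (p / 2) * (∑ j, A i j) ^ (1 - p / 2)) ^ 2 :=
        pow_le_pow_left₀ (sum_nonneg fun j _ => mul_nonneg (hA i j) (rpow_nonneg (hu j) _))
          (mulVec_rpow_le hA (half_pos hp) (by linarith) hu i) 2
    _ = (A *ᵥ u) i ^ p * (∑ j, A i j) ^ (2 - p) := by
        rw [mul_pow, ← rpow_mul_natCast hAu, ← rpow_mul_natCast hd]
        congr 2 <;> push_cast <;> ring

theorem sum_sq_mulVec_le [Fintype β] (hA : ∀ i j, 0 ≤ A i j) {p q : ℝ}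
    (hpq : p.HolderConjugate q) (hp2 : p ≤ 2) {x : α → ℝ} (hx : ∀ j, 0 ≤ x j) :
    ∑ i, (A *ᵥ x) i ^ 2 ≤ opNorm p q A ^ p * (∑ i, ∑ j, A i j) ^ (2 - p) * ∑ j, x j ^ 2 := by
  have hp := hpq.pos
  have hq := hpq.symm.pos
  set u : α → ℝ := fun j => x j ^ (2 / p)
  have hu : ∀ j, 0 ≤ u j := fun j => rpow_nonneg (hx j) _
  have hxu : x = fun j => u j ^ (p / 2) := funext fun j => by
    rw [← rpow_mul (hx j), div_mul_div_cancel₀ hp.ne', div_self two_ne_zero, rpow_one]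
  set g := A *ᵥ u
  have hg : ∀ i, 0 ≤ g i := fun i => sum_nonneg fun j _ => mul_nonneg (hA i j) (hu j)
  have hgq : ∀ i, g i ^ p = (g i ^ q) ^ (p / q) := fun i => by
    rw [← rpow_mul (hg i), mul_div_cancel₀ _ hq.ne']
  have hpq' : p / q = p - 1 := by rw [div_eq_iff hq.ne', hpq.sub_one_mul_conj]
  have hholder := sum_rpow_mul_rpow_le univ (fun i _ => rpow_nonneg (hg i) q)
    (D := fun i => ∑ j, A i j) (fun i _ => sum_nonneg fun j _ => hA i j) (a := p / q) (b := 2 - p)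
    (div_nonneg hp.le hq.le) (by linarith) (by rw [hpq']; ring)
  have hop : (∑ i, g i ^ q) ^ (p / q) ≤ opNorm p q A ^ p * ∑ j, x j ^ 2 :=
    calc (∑ i, g i ^ q) ^ (p / q) = pNorm q g ^ p := by
          rw [sum_congr rfl fun i _ => by rw [← abs_of_nonneg (hg i)], ← pNorm_rpow_self hq.ne',
            ← rpow_mul (pNorm_nonneg _ _), mul_div_cancel₀ _ hq.ne']
      _ ≤ (opNorm p q A * pNorm p u) ^ p :=
          rpow_le_rpow (pNorm_nonneg _ _) (pNorm_mulVec_le hp hq A u) hp.le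
      _ = opNorm p q A ^ p * ∑ j, x j ^ 2 := by
          rw [mul_rpow (opNorm_nonneg _ _ _) (pNorm_nonneg _ _), pNorm_rpow_self hp.ne']
          congr 1
          refine sum_congr rfl fun j _ => ?_
          rw [abs_of_nonneg (hu j), ← rpow_mul (hx j), div_mul_cancel₀ _ hp.ne', rpow_two]
  calc ∑ i, (A *ᵥ x) i ^ 2 ≤ ∑ i, (g i ^ q) ^ (p / q) * (∑ j, A i j) ^ (2 - p) :=
        sum_le_sum fun i _ => by
          rw [← hgq i, hxu]
          exact sq_mulVec_rpow_le hA hp hp2 hu i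
    _ ≤ (∑ i, g i ^ q) ^ (p / q) * (∑ i, ∑ j, A i j) ^ (2 - p) := hholder
    _ ≤ opNorm p q A ^ p * (∑ j, x j ^ 2) * (∑ i, ∑ j, A i j) ^ (2 - p) :=
        mul_le_mul_of_nonneg_right hop
          (rpow_nonneg (sum_nonneg fun i _ => sum_nonneg fun j _ => hA i j) _)
    _ = opNorm p q A ^ p * (∑ i, ∑ j, A i j) ^ (2 - p) * ∑ j, x j ^ 2 := by ring

end Interpolation

section Spectral

variable {α : Type*} [Fintype α]

theorem abs_le_of_mulVec_eq_smul {A : Matrix α α ℝ} (hA : ∀ i j, 0 ≤ A i j) {p q : ℝ}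
    (hpq : p.HolderConjugate q) (hp2 : p ≤ 2) {μ : ℝ} {y : α → ℝ} (hy : y ≠ 0)
    (h : A *ᵥ y = μ • y) :
    |μ| ≤ opNorm p q A ^ (p / 2) * (∑ i, ∑ j, A i j) ^ (1 - p / 2) := by
  set N := opNorm p q A
  set M := ∑ i, ∑ j, A i j
  have hN : 0 ≤ N := opNorm_nonneg p q A
  have hM : 0 ≤ M := sum_nonneg fun i _ => sum_nonneg fun j _ => hA i j
  have hpoint : ∀ i, |μ| * |y i| ≤ (A *ᵥ fun j => |y j|) i := fun i => by
    rw [← abs_mul, ← smul_eq_mul, ← Pi.smul_apply, ← h]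
    simpa only [mulVec, dotProduct, abs_mul, abs_of_nonneg (hA _ _)] using
      abs_sum_le_sum_abs (fun j => A i j * y j) univ
  have hy2 : 0 < ∑ j, y j ^ 2 := by
    obtain ⟨j, hj⟩ := Function.ne_iff.mp hy
    exact sum_pos' (fun j _ => sq_nonneg (y j)) ⟨j, mem_univ j, pow_two_pos_of_ne_zero hj⟩
  have hsq : |μ| ^ 2 * ∑ j, y j ^ 2 ≤ N ^ p * M ^ (2 - p) * ∑ j, y j ^ 2 :=
    calc |μ| ^ 2 * ∑ j, y j ^ 2 = ∑ i, (|μ| * |y i|) ^ 2 := by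
          simp only [mul_sum, mul_pow, sq_abs]
      _ ≤ ∑ i, (A *ᵥ fun j => |y j|) i ^ 2 :=
          sum_le_sum fun i _ => pow_le_pow_left₀ (by positivity) (hpoint i) 2
      _ ≤ N ^ p * M ^ (2 - p) * ∑ j, |y j| ^ 2 :=
          sum_sq_mulVec_le hA hpq hp2 fun j => abs_nonneg (y j)
      _ = N ^ p * M ^ (2 - p) * ∑ j, y j ^ 2 := by simp only [sq_abs]
  refine (pow_le_pow_iff_left₀ (abs_nonneg μ) (by positivity) two_ne_zero).1 ?_
  calc |μ| ^ 2 ≤ N ^ p * M ^ (2 - p) := le_of_mul_le_mul_right hsq hy2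
    _ = (N ^ (p / 2) * M ^ (1 - p / 2)) ^ 2 := by
        rw [mul_pow, ← rpow_mul_natCast hN, ← rpow_mul_natCast hM]
        congr 2 <;> push_cast <;> ring

lemma abs_specRad_le {A : Matrix α α ℝ} {C : ℝ} (hC : 0 ≤ C)
    (h : ∀ (μ : ℝ) (y : α → ℝ), y ≠ 0 → A *ᵥ y = μ • y → |μ| ≤ C) : |specRad A| ≤ C := by
  have hS : ∀ μ ∈ {μ : ℝ | ∃ y : α → ℝ, y ≠ 0 ∧ A *ᵥ y = μ • y}, |μ| ≤ C :=
    fun μ ⟨y, hy, hμ⟩ => h μ y hy hμ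
  refine abs_le.2 ⟨?_, Real.sSup_le (fun μ hμ => (abs_le.1 (hS μ hμ)).2) hC⟩
  rcases Set.eq_empty_or_nonempty {μ : ℝ | ∃ y : α → ℝ, y ≠ 0 ∧ A *ᵥ y = μ • y} with hS0 | ⟨μ, hμ⟩
  · rw [specRad, hS0, Real.sSup_empty]
    linarith
  · exact (abs_le.1 (hS μ hμ)).1.trans
      (le_csSup ⟨C, fun ν hν => (abs_le.1 (hS ν hν)).2⟩ hμ)

end Spectral

lemma adjMat_nonneg {n : ℕ} (G : SimpleGraph (Fin n)) (i j : Fin n) : 0 ≤ adjMat G i j := by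
  unfold adjMat
  split <;> norm_num

lemma sum_adjMat {n : ℕ} (G : SimpleGraph (Fin n)) :
    ∑ i, ∑ j, adjMat G i j = 2 * (Nat.card G.edgeSet : ℝ) := by
  have hrow : ∀ i, ∑ j, adjMat G i j = G.degree i := fun i => by
    simp [adjMat, sum_boole, ← G.card_neighborFinset_eq_degree, G.neighborFinset_eq_filter]
  rw [sum_congr rfl fun i _ => hrow i, Nat.card_eq_fintype_card, ← G.edgeFinset_card]
  exact_mod_cast G.sum_degrees_eq_twice_card_edges

lemma holderConjugate_two_mul_div {v e : ℝ} (hv : 0 < v) (hve : v ≤ e) :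
    (2 * e / (2 * e - v)).HolderConjugate (2 * e / v) := by
  rw [holderConjugate_iff, lt_div_iff₀ (by linarith)]
  refine ⟨by linarith, ?_⟩
  field_simp [(hv.trans_le hve).ne']
  ring

lemma two_mul_div_two_mul_sub_le_two {v e : ℝ} (hv : 0 < v) (hve : v ≤ e) :
    2 * e / (2 * e - v) ≤ 2 := by
  rw [div_le_iff₀ (by linarith)]
  linarith

lemma rpow_mul_rpow_pow_mul_zpow_eq {v e : ℕ} (hv : 0 < v) (hve : v ≤ e) {N M : ℝ} (hN : 0 ≤ N)
    (hM : 0 < M) :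
    (N ^ ((2 * e : ℝ) / (2 * e - v) / 2) * M ^ (1 - (2 * e : ℝ) / (2 * e - v) / 2)) ^ (2 * e - v)
      * M ^ ((v : ℤ) - e) = N ^ e := by
  have hden : (0 : ℝ) < 2 * e - v := by
    rw [sub_pos]
    exact_mod_cast (by omega : v < 2 * e)
  have hcast : ((2 * e - v : ℕ) : ℝ) = 2 * e - v := by
    push_cast [Nat.cast_sub (by omega : v ≤ 2 * e)]
    ring
  rw [← rpow_natCast, hcast, mul_rpow (rpow_nonneg hN _) (rpow_nonneg hM.le _), ← rpow_mul hN,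
    ← rpow_mul hM.le, ← rpow_intCast, mul_assoc, ← rpow_add hM]
  have h1 : (2 * e : ℝ) / (2 * e - v) / 2 * (2 * e - v) = e := by
    field_simp
  have h2 : (1 - (2 * e : ℝ) / (2 * e - v) / 2) * (2 * e - v) + ((v : ℤ) - e : ℤ) = 0 := by
    push_cast
    field_simp
    ring
  rw [h1, h2, rpow_zero, mul_one, rpow_natCast]

theorem stmt3_general (v e : ℕ) (hv : 0 < v) (hve : v ≤ e) (H : SimpleGraph (Fin v))
    (hcert : ∀ (n : ℕ) (G : SimpleGraph (Fin n)),
      (Nat.card (H →g G) : ℝ)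
        ≥ opNorm ((2 * e : ℝ) / (2 * e - v)) ((2 * e : ℝ) / v) (adjMat G) ^ e) :
    ∀ (n : ℕ) (G : SimpleGraph (Fin n)), 0 < Nat.card G.edgeSet →
      (Nat.card (H →g G) : ℝ)
        ≥ specRad (adjMat G) ^ (2 * e - v)
            * (2 * (Nat.card G.edgeSet : ℝ)) ^ ((v : ℤ) - (e : ℤ)) := by
  intro n G hG
  have hV : (0 : ℝ) < v := by exact_mod_cast hv
  have hVE : (v : ℝ) ≤ e := by exact_mod_cast hve
  have hM : 0 < 2 * (Nat.card G.edgeSet : ℝ) := by positivity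
  set p : ℝ := 2 * e / (2 * e - v)
  set N := opNorm p ((2 * e : ℝ) / v) (adjMat G)
  have hspec : |specRad (adjMat G)| ≤ N ^ (p / 2) * (2 * (Nat.card G.edgeSet : ℝ)) ^ (1 - p / 2) :=
    abs_specRad_le (mul_nonneg (rpow_nonneg (opNorm_nonneg _ _ _) _) (rpow_nonneg hM.le _))
      fun μ y hy h => sum_adjMat G ▸ abs_le_of_mulVec_eq_smul (adjMat_nonneg G)
        (holderConjugate_two_mul_div hV hVE) (two_mul_div_two_mul_sub_le_two hV hVE) hy h
  calc specRad (adjMat G) ^ (2 * e - v) * (2 * (Nat.card G.edgeSet : ℝ)) ^ ((v : ℤ) - e)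
      ≤ |specRad (adjMat G)| ^ (2 * e - v) * (2 * (Nat.card G.edgeSet : ℝ)) ^ ((v : ℤ) - e) :=
        mul_le_mul_of_nonneg_right ((le_abs_self _).trans (abs_pow _ _).le) (zpow_nonneg hM.le _)
    _ ≤ _ := by gcongr
    _ = N ^ e := rpow_mul_rpow_pow_mul_zpow_eq hv hve (opNorm_nonneg _ _ _) hM
    _ ≤ _ := hcert n G

/-- If a bipartite graph H with v vertices and e edges, v ≤ e, satisfies the
operator-norm Sidorenko certificate hom(H,G) ≥ ‖A(G)‖_{s'→s}^e for every graph G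
(where s = 2e/v, s' = 2e/(2e-v)), then H satisfies the edge-spectral Sidorenko
inequality hom(H,G) ≥ λ(G)^{2e-v} M(G)^{v-e} for every graph G with M(G) > 0. -/
theorem stmt3 (v e : ℕ) (hv : 0 < v) (hve : v ≤ e) (H : SimpleGraph (Fin v))
    (hbip : H.Colorable 2) (hedges : Nat.card H.edgeSet = e)
    (hcert : ∀ (n : ℕ) (G : SimpleGraph (Fin n)),
      (Nat.card (H →g G) : ℝ)
        ≥ opNorm ((2 * e : ℝ) / (2 * e - v)) ((2 * e : ℝ) / v) (adjMat G) ^ e) :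
    ∀ (n : ℕ) (G : SimpleGraph (Fin n)), 0 < Nat.card G.edgeSet →
      (Nat.card (H →g G) : ℝ)
        ≥ specRad (adjMat G) ^ (2 * e - v)
            * (2 * (Nat.card G.edgeSet : ℝ)) ^ ((v : ℤ) - (e : ℤ)) :=
  stmt3_general v e hv hve H hcert
end

section
/- Let H be a graph with vertex partition V(H) = U ⊔ W, biadjacency matrix M with ρ = ‖M‖, unit Perron eigenvector x, and write λ = λ(H), λ_U = λ(H[U]). Let μ(U) = Σ_{u∈U} x_u². If (λ − λ_U)² + ρ² > 0, then μ(U) ≤ ρ² / ((λ − λ_U)² + ρ²) ≤ e_H(U,W) / ((λ − λ_U)² + e_H(U,W)). -/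
open scoped Classical BigOperators

/-- Adjacency matrix of the induced subgraph on a vertex subset. -/
noncomputable def inducedMat {n : ℕ} (G : SimpleGraph (Fin n)) (U : Finset (Fin n)) :
    Matrix {x // x ∈ U} {x // x ∈ U} ℝ :=
  fun i j => adjMat G i.1 j.1

/-- Biadjacency matrix of the cut between U and its complement. -/
noncomputable def cutMat {n : ℕ} (G : SimpleGraph (Fin n)) (U : Finset (Fin n)) :
    Matrix {x // x ∈ U} {x // x ∈ Uᶜ} ℝ :=
  fun i j => adjMat G i.1 j.1

/-!
Write `y = x|_U`, `z = x|_W`. The rows of `A x = λ x` indexed by `U` read `λ y = A_U y + M z`;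
pairing with `y` and using the Rayleigh bound `y ⬝ A_U y ≤ λ_U ‖y‖²` and `‖M z‖ ≤ ρ ‖z‖` gives
`(λ - λ_U) μ ≤ ρ √(μ (1 - μ))`. Since `λ_U ≤ λ` (Rayleigh again, for an eigenvector of `A_U`
extended by zero), both sides may be squared, and solving for `μ` gives the first bound. The second follows from
`ρ² ≤ ‖M‖_F² = e(U, W)` and the monotonicity of `t ↦ t / (c + t)`.
-/

open Matrix Function

section DotProduct

variable {α β : Type*} [Fintype α] [Fintype β]

lemma Matrix.dotProduct_self_nonneg (v : α → ℝ) : 0 ≤ v ⬝ᵥ v := by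
  simpa using dotProduct_star_self_nonneg v

lemma Matrix.dotProduct_self_pos {v : α → ℝ} (hv : v ≠ 0) : 0 < v ⬝ᵥ v := by
  simpa using dotProduct_self_star_pos_iff.mpr hv

lemma Matrix.dotProduct_sq_le (v w : α → ℝ) : (v ⬝ᵥ w) ^ 2 ≤ (v ⬝ᵥ v) * (w ⬝ᵥ w) := by
  simpa [dotProduct, sq] using Finset.sum_mul_sq_le_sq_mul_sq Finset.univ v w

lemma Matrix.dotProduct_extend_zero {f : β → α} (hf : Injective f) (w : β → ℝ) (u : α → ℝ) :
    extend f w 0 ⬝ᵥ u = w ⬝ᵥ (u ∘ f) := by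
  refine (Fintype.sum_of_injective f hf _ _ (fun a ha ↦ ?_) fun b ↦ ?_).symm
  · simp [extend_apply' _ _ _ (by simpa using ha)]
  · simp [hf.extend_apply]

end DotProduct

namespace Matrix.IsHermitian

variable {α β : Type*} [Fintype α] [Fintype β] [DecidableEq α] {A : Matrix α α ℝ}

lemma dotProduct_mulVec_le_mul (hA : A.IsHermitian) {c : ℝ} (hc : ∀ i, hA.eigenvalues i ≤ c)
    (y : α → ℝ) : y ⬝ᵥ A *ᵥ y ≤ c * (y ⬝ᵥ y) := by
  set b := hA.eigenvectorBasis
  have parseval (u : α → ℝ) : y ⬝ᵥ u = ∑ i, (y ⬝ᵥ b i) * (b i ⬝ᵥ u) := by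
    simpa [EuclideanSpace.inner_eq_star_dotProduct, dotProduct_comm] using
      (b.sum_inner_mul_inner (WithLp.toLp 2 y) (WithLp.toLp 2 u)).symm
  have hb (i : α) : b i ⬝ᵥ A *ᵥ y = hA.eigenvalues i * (b i ⬝ᵥ y) := by
    rw [dotProduct_mulVec, ← mulVec_transpose, (isHermitian_iff_isSymm.mp hA).eq,
      hA.mulVec_eigenvectorBasis, smul_dotProduct, smul_eq_mul]
  rw [parseval, parseval, Finset.mul_sum]
  refine Finset.sum_le_sum fun i _ ↦ ?_
  rw [hb, dotProduct_comm (b i)]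
  nlinarith [hc i, mul_self_nonneg (y ⬝ᵥ b i)]

lemma le_of_mulVec_eq_smul (hA : A.IsHermitian) {c : ℝ} (hc : ∀ i, hA.eigenvalues i ≤ c)
    {μ : ℝ} {x : α → ℝ} (hx : x ≠ 0) (h : A *ᵥ x = μ • x) : μ ≤ c := by
  have := hA.dotProduct_mulVec_le_mul hc x
  rw [h, dotProduct_smul, smul_eq_mul] at this
  exact le_of_mul_le_mul_right this (dotProduct_self_pos hx)

lemma exists_mulVec_eq_eigenvalues_smul (hA : A.IsHermitian) (i : α) :
    ∃ x : α → ℝ, x ≠ 0 ∧ A *ᵥ x = hA.eigenvalues i • x := by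
  refine ⟨hA.eigenvectorBasis i, ?_, hA.mulVec_eigenvectorBasis i⟩
  simpa using hA.eigenvectorBasis.orthonormal.ne_zero i

lemma bddAbove_eigenvalue_set (hA : A.IsHermitian) :
    BddAbove {μ : ℝ | ∃ x : α → ℝ, x ≠ 0 ∧ A *ᵥ x = μ • x} := by
  obtain ⟨c, hc⟩ := (Set.finite_range hA.eigenvalues).bddAbove
  exact ⟨c, fun μ ⟨x, hx, h⟩ ↦ hA.le_of_mulVec_eq_smul (fun i ↦ hc ⟨i, rfl⟩) hx h⟩

lemma eigenvalues_le_specRad (hA : A.IsHermitian) (i : α) : hA.eigenvalues i ≤ specRad A :=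
  le_csSup hA.bddAbove_eigenvalue_set (hA.exists_mulVec_eq_eigenvalues_smul i)

lemma dotProduct_mulVec_le_specRad_mul (hA : A.IsHermitian) (y : α → ℝ) :
    y ⬝ᵥ A *ᵥ y ≤ specRad A * (y ⬝ᵥ y) :=
  hA.dotProduct_mulVec_le_mul hA.eigenvalues_le_specRad y

lemma specRad_submatrix_le [DecidableEq β] [Nonempty β] (hA : A.IsHermitian)
    {f : β → α} (hf : Injective f) : specRad (A.submatrix f f) ≤ specRad A := by
  refine csSup_le ⟨_, (hA.submatrix f).exists_mulVec_eq_eigenvalues_smul (Classical.arbitrary β)⟩ ?_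
  rintro m ⟨w, hw, h⟩
  have hext (u : α → ℝ) := dotProduct_extend_zero hf w u
  have hrow : (A *ᵥ extend f w 0) ∘ f = A.submatrix f f *ᵥ w := by
    ext b
    rw [Function.comp_apply, mulVec, dotProduct_comm, hext, dotProduct_comm]
    rfl
  have := hA.dotProduct_mulVec_le_specRad_mul (extend f w 0)
  rw [hext, hext, hrow, h, dotProduct_smul, smul_eq_mul, extend_comp hf] at this
  exact le_of_mul_le_mul_right this (dotProduct_self_pos hw)

end Matrix.IsHermitian

section OperatorNorm

variable {α β : Type*} [Fintype α] [Fintype β]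

lemma pNorm_two_eq_sqrt (v : α → ℝ) : pNorm 2 v = √(v ⬝ᵥ v) := by
  simp [pNorm, Real.sqrt_eq_rpow, dotProduct, ← sq]

lemma pNorm_two_nonneg (v : α → ℝ) : 0 ≤ pNorm 2 v := by
  rw [pNorm_two_eq_sqrt]
  exact Real.sqrt_nonneg _

lemma pNorm_two_pos {v : α → ℝ} (hv : v ≠ 0) : 0 < pNorm 2 v := by
  rw [pNorm_two_eq_sqrt]
  exact Real.sqrt_pos.mpr (dotProduct_self_pos hv)

lemma Matrix.mulVec_dotProduct_self_le (M : Matrix β α ℝ) (z : α → ℝ) :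
    M *ᵥ z ⬝ᵥ M *ᵥ z ≤ (∑ i, ∑ j, M i j ^ 2) * (z ⬝ᵥ z) := by
  rw [Finset.sum_mul]
  refine Finset.sum_le_sum fun i _ ↦ ?_
  simpa [← sq, dotProduct, mulVec] using dotProduct_sq_le (M i) z

lemma pNorm_two_mulVec_div_le (M : Matrix β α ℝ) {z : α → ℝ} (hz : z ≠ 0) :
    pNorm 2 (M *ᵥ z) / pNorm 2 z ≤ √(∑ i, ∑ j, M i j ^ 2) := by
  rw [div_le_iff₀ (pNorm_two_pos hz), pNorm_two_eq_sqrt, pNorm_two_eq_sqrt,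
    ← Real.sqrt_mul (by positivity)]
  exact Real.sqrt_le_sqrt (mulVec_dotProduct_self_le M z)

lemma opNorm_two_nonneg (M : Matrix β α ℝ) : 0 ≤ opNorm 2 2 M :=
  Real.sSup_nonneg fun _ ⟨_, _, hc⟩ ↦ hc ▸ div_nonneg (pNorm_two_nonneg _) (pNorm_two_nonneg _)

lemma opNorm_two_sq_le (M : Matrix β α ℝ) : opNorm 2 2 M ^ 2 ≤ ∑ i, ∑ j, M i j ^ 2 := by
  refine (Real.le_sqrt (opNorm_two_nonneg M) (by positivity)).mp ?_
  exact Real.sSup_le (fun _ ⟨z, hz, hc⟩ ↦ hc ▸ pNorm_two_mulVec_div_le M hz) (Real.sqrt_nonneg _)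

lemma pNorm_two_mulVec_le_opNorm_mul (M : Matrix β α ℝ) (z : α → ℝ) :
    pNorm 2 (M *ᵥ z) ≤ opNorm 2 2 M * pNorm 2 z := by
  rcases eq_or_ne z 0 with rfl | hz
  · simp [pNorm_two_eq_sqrt]
  rw [← div_le_iff₀ (pNorm_two_pos hz)]
  refine le_csSup ⟨√(∑ i, ∑ j, M i j ^ 2), ?_⟩ ⟨z, hz, rfl⟩
  rintro _ ⟨z, hz, rfl⟩
  exact pNorm_two_mulVec_div_le M hz

lemma mulVec_dotProduct_self_le_opNorm_sq (M : Matrix β α ℝ) (z : α → ℝ) :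
    M *ᵥ z ⬝ᵥ M *ᵥ z ≤ opNorm 2 2 M ^ 2 * (z ⬝ᵥ z) := by
  have := pow_le_pow_left₀ (pNorm_two_nonneg _) (pNorm_two_mulVec_le_opNorm_mul M z) 2
  rwa [mul_pow, pNorm_two_eq_sqrt, pNorm_two_eq_sqrt, Real.sq_sqrt (dotProduct_self_nonneg _),
    Real.sq_sqrt (dotProduct_self_nonneg _)] at this

end OperatorNorm

lemma le_div_of_mul_sq_le {d ρ μ : ℝ} (hμ : 0 ≤ μ) (hpos : 0 < d ^ 2 + ρ ^ 2)
    (h : (d * μ) ^ 2 ≤ μ * (ρ ^ 2 * (1 - μ))) : μ ≤ ρ ^ 2 / (d ^ 2 + ρ ^ 2) := by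
  rw [le_div_iff₀ hpos]
  rcases hμ.eq_or_lt with rfl | hμ
  · simpa using sq_nonneg ρ
  · have : μ * (d ^ 2 * μ) ≤ μ * (ρ ^ 2 * (1 - μ)) := by linarith
    nlinarith [le_of_mul_le_mul_left this hμ]

lemma div_add_le_div_add {a b c : ℝ} (hc : 0 ≤ c) (ha : 0 < c + a) (hab : a ≤ b) :
    a / (c + a) ≤ b / (c + b) := by
  rw [div_le_div_iff₀ ha (by linarith)]
  nlinarith

section PrincipalBlock

variable {α : Type*} [Fintype α] [DecidableEq α]

lemma Matrix.mulVec_apply_eq_add_compl (A : Matrix α α ℝ) (s : Finset α) (x : α → ℝ) (i : s) :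
    (A *ᵥ x) i = (A.submatrix ((↑) : ↥s → α) ((↑) : ↥s → α) *ᵥ (x ∘ Subtype.val)) i
      + (A.submatrix ((↑) : ↥s → α) ((↑) : ↥sᶜ → α) *ᵥ (x ∘ Subtype.val)) i := by
  simp only [mulVec, dotProduct, submatrix_apply, Function.comp_apply]
  rw [Finset.sum_coe_sort s (fun j ↦ A i j * x j), Finset.sum_coe_sort sᶜ (fun j ↦ A i j * x j)]
  exact (Finset.sum_add_sum_compl s _).symm

lemma Matrix.IsHermitian.sum_sq_le_of_mulVec_eq_specRad_smul {A : Matrix α α ℝ}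
    (hA : A.IsHermitian) (s : Finset α) {x : α → ℝ} (hx : ∑ i, x i ^ 2 = 1)
    (heig : A *ᵥ x = specRad A • x)
    (hpos : 0 < (specRad A - specRad (A.submatrix ((↑) : ↥s → α) ((↑) : ↥s → α))) ^ 2
      + opNorm 2 2 (A.submatrix ((↑) : ↥s → α) ((↑) : ↥sᶜ → α)) ^ 2) :
    ∑ i ∈ s, x i ^ 2 ≤ opNorm 2 2 (A.submatrix ((↑) : ↥s → α) ((↑) : ↥sᶜ → α)) ^ 2
      / ((specRad A - specRad (A.submatrix ((↑) : ↥s → α) ((↑) : ↥s → α))) ^ 2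
        + opNorm 2 2 (A.submatrix ((↑) : ↥s → α) ((↑) : ↥sᶜ → α)) ^ 2) := by
  set B := A.submatrix ((↑) : ↥s → α) ((↑) : ↥s → α)
  set M := A.submatrix ((↑) : ↥s → α) ((↑) : ↥sᶜ → α)
  set μ := ∑ i ∈ s, x i ^ 2
  set y : ↥s → ℝ := x ∘ Subtype.val
  set z : ↥sᶜ → ℝ := x ∘ Subtype.val
  have hyy : y ⬝ᵥ y = μ := (Finset.sum_coe_sort s fun i ↦ x i * x i).trans (by simp only [μ, sq])
  have hzz : z ⬝ᵥ z = 1 - μ := by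
    rw [← hx, ← Finset.sum_add_sum_compl s, add_sub_cancel_left]
    exact (Finset.sum_coe_sort sᶜ fun i ↦ x i * x i).trans (by simp only [sq])
  have hsplit : specRad A • y = B *ᵥ y + M *ᵥ z :=
    funext fun i ↦ by rw [Pi.add_apply, ← A.mulVec_apply_eq_add_compl, heig]; rfl
  have hquad : specRad A * μ = y ⬝ᵥ B *ᵥ y + y ⬝ᵥ M *ᵥ z := by
    rw [← hyy, ← smul_eq_mul, ← dotProduct_smul, hsplit, dotProduct_add]
  have hB : y ⬝ᵥ B *ᵥ y ≤ specRad B * μ :=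
    hyy ▸ (hA.submatrix _).dotProduct_mulVec_le_specRad_mul y
  have hM : (y ⬝ᵥ M *ᵥ z) ^ 2 ≤ μ * (opNorm 2 2 M ^ 2 * (1 - μ)) := by
    refine (dotProduct_sq_le _ _).trans ?_
    rw [← hzz, ← hyy]
    exact mul_le_mul_of_nonneg_left (mulVec_dotProduct_self_le_opNorm_sq M z)
      (dotProduct_self_nonneg y)
  have hgap : 0 ≤ (specRad A - specRad B) * μ := by
    -- for `s = ∅`, `specRad B = sSup ∅ = 0` may exceed `specRad A`, but then `μ = 0`
    rcases s.eq_empty_or_nonempty with rfl | hs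
    · simp [μ]
    have := hs.to_subtype
    exact mul_nonneg (sub_nonneg.mpr (hA.specRad_submatrix_le Subtype.val_injective))
      (Finset.sum_nonneg fun i _ ↦ sq_nonneg (x i))
  exact le_div_of_mul_sq_le (hyy ▸ dotProduct_self_nonneg y) hpos
    ((pow_le_pow_left₀ hgap (by linarith) 2).trans hM)

end PrincipalBlock

lemma isHermitian_adjMat {n : ℕ} (G : SimpleGraph (Fin n)) : (adjMat G).IsHermitian :=
  isHermitian_iff_isSymm.mpr (G.isSymm_adjMatrix (α := ℝ))

lemma sum_sq_cutMat {n : ℕ} (G : SimpleGraph (Fin n)) (U : Finset (Fin n)) :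
    ∑ i, ∑ j, cutMat G U i j ^ 2 = ∑ u ∈ U, ∑ w ∈ Uᶜ, if G.Adj u w then (1 : ℝ) else 0 := by
  have hsq (u w : Fin n) : (if G.Adj u w then (1 : ℝ) else 0) ^ 2 = if G.Adj u w then 1 else 0 := by
    split_ifs <;> norm_num
  simp only [cutMat, adjMat, hsq]
  rw [← Finset.sum_coe_sort U]
  exact Finset.sum_congr rfl fun u _ ↦ Finset.sum_coe_sort Uᶜ fun w ↦ if G.Adj u w then 1 else 0

theorem stmt9_general (n : ℕ) (G : SimpleGraph (Fin n)) (U : Finset (Fin n))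
    (x : Fin n → ℝ) (hx1 : ∑ v, x v ^ 2 = 1)
    (heig : (adjMat G).mulVec x = specRad (adjMat G) • x)
    (hpos : (specRad (adjMat G) - specRad (inducedMat G U)) ^ 2
        + opNorm 2 2 (cutMat G U) ^ 2 > 0) :
    (∑ u ∈ U, x u ^ 2)
        ≤ opNorm 2 2 (cutMat G U) ^ 2
            / ((specRad (adjMat G) - specRad (inducedMat G U)) ^ 2
                + opNorm 2 2 (cutMat G U) ^ 2) ∧
      opNorm 2 2 (cutMat G U) ^ 2
          / ((specRad (adjMat G) - specRad (inducedMat G U)) ^ 2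
              + opNorm 2 2 (cutMat G U) ^ 2)
        ≤ (∑ u ∈ U, ∑ w ∈ Uᶜ, if G.Adj u w then (1 : ℝ) else 0)
            / ((specRad (adjMat G) - specRad (inducedMat G U)) ^ 2
                + ∑ u ∈ U, ∑ w ∈ Uᶜ, if G.Adj u w then (1 : ℝ) else 0) := by
  refine ⟨(isHermitian_adjMat G).sum_sq_le_of_mulVec_eq_specRad_smul U hx1 heig hpos,
    div_add_le_div_add (sq_nonneg _) hpos ?_⟩
  rw [← sum_sq_cutMat]
  exact opNorm_two_sq_le _

/-- Spectral cut bound (c): if x is a unit Perron eigenvector of H and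
(λ − λ_U)² + ρ² > 0 with ρ = ‖M‖, then the Perron mass of U satisfies
μ(U) ≤ ρ²/((λ−λ_U)²+ρ²) ≤ e_H(U,W)/((λ−λ_U)²+e_H(U,W)). -/
theorem stmt9 (n : ℕ) (G : SimpleGraph (Fin n)) (U : Finset (Fin n))
    (x : Fin n → ℝ) (hx0 : ∀ v, 0 ≤ x v) (hx1 : ∑ v, x v ^ 2 = 1)
    (heig : (adjMat G).mulVec x = specRad (adjMat G) • x)
    (hpos : (specRad (adjMat G) - specRad (inducedMat G U)) ^ 2
        + opNorm 2 2 (cutMat G U) ^ 2 > 0) :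
    (∑ u ∈ U, x u ^ 2)
        ≤ opNorm 2 2 (cutMat G U) ^ 2
            / ((specRad (adjMat G) - specRad (inducedMat G U)) ^ 2
                + opNorm 2 2 (cutMat G U) ^ 2) ∧
      opNorm 2 2 (cutMat G U) ^ 2
          / ((specRad (adjMat G) - specRad (inducedMat G U)) ^ 2
              + opNorm 2 2 (cutMat G U) ^ 2)
        ≤ (∑ u ∈ U, ∑ w ∈ Uᶜ, if G.Adj u w then (1 : ℝ) else 0)
            / ((specRad (adjMat G) - specRad (inducedMat G U)) ^ 2
                + ∑ u ∈ U, ∑ w ∈ Uᶜ, if G.Adj u w then (1 : ℝ) else 0) :=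
  stmt9_general n G U x hx1 heig hpos
end
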